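/- arXiv:1505.06548 — 2 statements merged into one kernel-verified Lean document; each statement's English description precedes it below -/
import Mathlib

section
/- Let S = F_q[[t]] with q odd, n ≥ 5, and let Q, Q' ∈ S[X_0, …, X_n] be homogeneous of degree 2 forming a semistable pencil whose generic fiber {Q_K = Q'_K = 0} ⊂ P^n_K (K = F_q((t))) is a smooth complete intersection of two quadrics. Let Q_0, Q_0' be the reductions modulo t. Then the closed fiber contains no linear subspace of dimension n−2 defined over F_q: there do not exist two linearly independent linear forms L_1, L_2 ∈ F_q[X_0, …, X_n] such that both Q_0 and Q_0' lie in the ideal generated by L_1 and L_2. -/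
noncomputable section

open MvPolynomial

/-- The linear change of coordinates `X i ↦ ∑ j, M i j • X j` applied to a polynomial. -/
def changeCoords {R : Type} [CommRing R] {m : ℕ}
    (M : Matrix (Fin m) (Fin m) R) (F : MvPolynomial (Fin m) R) : MvPolynomial (Fin m) R :=
  aeval (fun i => ∑ j, C (M i j) * X j) F

/-- The Plücker coordinate `a_{IJ}` of the wedge `F ∧ G` of two polynomials, in the basis of
wedges of monomials. -/
def wedgeCoeff {R : Type} [CommRing R] {m : ℕ}
    (F G : MvPolynomial (Fin m) R) (I J : (Fin m) →₀ ℕ) : R :=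
  coeff I F * coeff J G - coeff J F * coeff I G

/-- `PencilMultGE t F G w μ` says the multiplicity of the pencil spanned by `F, G` at the
weight system `w` is at least `μ`: for every pair `I ≠ J` with `a_{IJ} ≠ 0` one has
`v_t(a_{IJ}) + ∑ j, w j * (I j + J j) ≥ μ`. -/
def PencilMultGE {R : Type} [CommRing R] {m : ℕ} (t : R)
    (F G : MvPolynomial (Fin m) R) (w : Fin m → ℤ) (μ : ℤ) : Prop :=
  ∀ I J : (Fin m) →₀ ℕ, I ≠ J → wedgeCoeff F G I J ≠ 0 →
    ∀ k : ℕ, (k : ℤ) ≤ μ - ∑ j, w j * ((I j : ℤ) + (J j : ℤ)) → t ^ k ∣ wedgeCoeff F G I J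

/-- Kollár-style semistability for a pencil of degree-`δ` forms over a discrete valuation ring
with uniformizer `t`: for every coordinate change with unit determinant over the DVR and every
weight system `W`, `mult_W (F, G) ≤ 2δ(∑ w_i)/m`. -/
def PencilSemistable {R : Type} [CommRing R] {m : ℕ} (t : R) (δ : ℕ)
    (F G : MvPolynomial (Fin m) R) : Prop :=
  ∀ M : Matrix (Fin m) (Fin m) R, IsUnit M.det →
    ∀ (w : Fin m → ℤ) (μ : ℤ),
      PencilMultGE t (changeCoords M F) (changeCoords M G) w μ →
      (m : ℤ) * μ ≤ 2 * (δ : ℤ) * ∑ j, w j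

/-- The canonical map from `F_q[[t]]` to a fixed algebraic closure of `F_q((t))`. -/
def toOmega (Fq : Type) [Field Fq] :
    PowerSeries Fq →+* AlgebraicClosure (LaurentSeries Fq) :=
  (algebraMap (LaurentSeries Fq) (AlgebraicClosure (LaurentSeries Fq))).comp
    (algebraMap (PowerSeries Fq) (LaurentSeries Fq))

/-- The generic fiber of the pencil `{Q = Q' = 0}` over `F_q((t))` is a smooth complete
intersection of two quadrics: `Q_K, Q'_K` are linearly independent and the Jacobian matrix of
`(Q, Q')` has rank `2` (linearly independent gradients) at every nontrivial common zero over
an algebraic closure of `F_q((t))`. -/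
def SmoothCIGenericFiber (Fq : Type) [Field Fq] {m : ℕ}
    (Q Q' : MvPolynomial (Fin m) (PowerSeries Fq)) : Prop :=
  LinearIndependent (LaurentSeries Fq)
    ![MvPolynomial.map (algebraMap (PowerSeries Fq) (LaurentSeries Fq)) Q,
      MvPolynomial.map (algebraMap (PowerSeries Fq) (LaurentSeries Fq)) Q'] ∧
  ∀ a : Fin m → AlgebraicClosure (LaurentSeries Fq), a ≠ 0 →
    eval a (MvPolynomial.map (toOmega Fq) Q) = 0 →
    eval a (MvPolynomial.map (toOmega Fq) Q') = 0 →
    LinearIndependent (AlgebraicClosure (LaurentSeries Fq))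
      ![fun i => eval a (pderiv i (MvPolynomial.map (toOmega Fq) Q)),
        fun i => eval a (pderiv i (MvPolynomial.map (toOmega Fq) Q'))]

/-! After a unimodular change of coordinates over `F_q` the two linear forms become `X_z, X_o`,
so every coefficient of `Q, Q'` at a monomial avoiding `X_z, X_o` is divisible by `t`. For the
weight system `w = e_z + e_o` this gives `v_t(a_{IJ}) + w·(I + J) ≥ 2` for every Plücker
coordinate, so the pencil has multiplicity at least `2` while `∑ w_i = 2`; semistability then
forces `2(n + 1) ≤ 2·2·2`. -/

theorem MvPolynomial.IsHomogeneous.exists_sum_smul_X {σ K : Type*} [Fintype σ] [CommSemiring K]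
    {L : MvPolynomial σ K} (hL : L.IsHomogeneous 1) :
    ∃ v : σ → K, ∑ i, v i • X i = L := by
  have : L ∈ homogeneousSubmodule σ K 1 := hL
  rwa [homogeneousSubmodule_one_eq_span_X, Submodule.mem_span_range_iff_exists_fun] at this

theorem changeCoords_sum_smul_X {R : Type} [CommRing R] {m : ℕ}
    (M : Matrix (Fin m) (Fin m) R) (v : Fin m → R) :
    changeCoords M (∑ i, v i • X i) = ∑ j, Matrix.vecMul v M j • X j := by
  simp only [changeCoords, map_sum, map_smul, aeval_X, Finset.smul_sum, Matrix.vecMul, dotProduct,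
    Finset.sum_smul]
  rw [Finset.sum_comm]
  simp only [smul_eq_C_mul, C_mul, mul_assoc]

theorem exists_isUnit_det_vecMul_eq_single {K : Type*} [Field K] {m : ℕ} {ι : Type*}
    {v : ι → Fin m → K} (hv : LinearIndependent K v) :
    ∃ (M : Matrix (Fin m) (Fin m) K) (σ : ι → Fin m), IsUnit M.det ∧
      ∀ i, Matrix.vecMul (v i) M = Pi.single (σ i) 1 := by
  classical
  let b := Module.Basis.sumExtend hv
  let e := b.indexEquiv (Pi.basisFun K (Fin m))
  let φ := b.equiv (Pi.basisFun K (Fin m)) e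
  refine ⟨(LinearMap.toMatrix' (φ : (Fin m → K) →ₗ[K] Fin m → K)).transpose,
    fun i => e (.inl i), ?_, ?_⟩
  · rw [Matrix.det_transpose, LinearMap.det_toMatrix']
    exact φ.isUnit_det'
  · intro i
    rw [Matrix.vecMul_transpose, LinearMap.toMatrix'_mulVec]
    have : b (.inl i) = v i := by
      simp only [b, Module.Basis.sumExtend, Module.Basis.reindex_apply, Module.Basis.coe_extend]
      rfl
    rw [← this]
    simp [φ]

theorem exists_changeCoords_eq_X {K : Type} [Field K] {m : ℕ} {ι : Type*}
    {L : ι → MvPolynomial (Fin m) K} (hL : ∀ i, (L i).IsHomogeneous 1)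
    (hli : LinearIndependent K L) :
    ∃ (M : Matrix (Fin m) (Fin m) K) (σ : ι → Fin m), IsUnit M.det ∧
      ∀ i, changeCoords M (L i) = X (σ i) := by
  have : ∀ i, ∃ v : Fin m → K, ∑ j, v j • X j = L i := fun i => (hL i).exists_sum_smul_X
  choose v hv using this
  have hvli : LinearIndependent K v := by
    refine LinearIndependent.of_comp
      (Fintype.linearCombination K (X : Fin m → MvPolynomial (Fin m) K)) ?_
    convert hli using 1
    ext1 i
    simp [Fintype.linearCombination_apply, hv]
  obtain ⟨M, σ, hM, hσ⟩ := exists_isUnit_det_vecMul_eq_single hvli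
  refine ⟨M, σ, hM, fun i => ?_⟩
  rw [← hv, changeCoords_sum_smul_X, hσ]
  simp [Pi.single_apply]

theorem changeCoords_mem_span_pair {R : Type} [CommRing R] {m : ℕ}
    (M : Matrix (Fin m) (Fin m) R) {P a b : MvPolynomial (Fin m) R}
    (h : P ∈ Ideal.span {a, b}) :
    changeCoords M P ∈ Ideal.span {changeCoords M a, changeCoords M b} := by
  obtain ⟨x, y, rfl⟩ := Ideal.mem_span_pair.mp h
  exact Ideal.mem_span_pair.mpr ⟨changeCoords M x, changeCoords M y, by simp [changeCoords]⟩

theorem map_changeCoords {R S : Type} [CommRing R] [CommRing S] {m : ℕ} (f : R →+* S)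
    (M : Matrix (Fin m) (Fin m) R) (F : MvPolynomial (Fin m) R) :
    map f (changeCoords M F) = changeCoords (M.map f) (map f F) := by
  induction F using MvPolynomial.induction_on with
  | C r => simp [changeCoords]
  | add p q hp hq => simp only [changeCoords, map_add] at *; rw [hp, hq]
  | mul_X p i hp =>
    simp only [changeCoords, map_mul, map_sum, aeval_X, map_X, map_C] at *
    rw [hp]
    simp [Matrix.map_apply]

theorem MvPolynomial.coeff_eq_zero_of_mem_ideal_span_X_image {σ R : Type*} [CommSemiring R]
    {s : Set σ} {P : MvPolynomial σ R} (hP : P ∈ Ideal.span (X '' s)) {I : σ →₀ ℕ}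
    (hI : ∀ i ∈ s, I i = 0) : coeff I P = 0 := by
  by_contra hne
  obtain ⟨i, hi, hIi⟩ := (mem_ideal_span_X_image.mp hP) I (mem_support_iff.mpr hne)
  exact hIi (hI i hi)

theorem wedgeCoeff_dvd {R : Type} [CommRing R] {m : ℕ} {t : R} {a b : ℕ}
    {F G : MvPolynomial (Fin m) R} {I J : Fin m →₀ ℕ}
    (hFI : t ^ a ∣ coeff I F) (hGI : t ^ a ∣ coeff I G)
    (hFJ : t ^ b ∣ coeff J F) (hGJ : t ^ b ∣ coeff J G) :
    t ^ (a + b) ∣ wedgeCoeff F G I J := by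
  rw [pow_add]
  exact dvd_sub (mul_dvd_mul hFI hGJ) (mul_comm (t ^ a) _ ▸ mul_dvd_mul hFJ hGI)

theorem sum_single_add_single_mul {m : ℕ} (z o : Fin m) (x : Fin m → ℤ) :
    ∑ j, (Pi.single z 1 + Pi.single o 1 : Fin m → ℤ) j * x j = x z + x o := by
  simp [add_mul, Finset.sum_add_distrib, Pi.single_apply]

theorem pencilMultGE_two_of_dvd_coeff {R : Type} [CommRing R] {m : ℕ} (t : R)
    {F G : MvPolynomial (Fin m) R} (z o : Fin m)
    (hF : ∀ I : Fin m →₀ ℕ, I z = 0 → I o = 0 → t ∣ coeff I F)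
    (hG : ∀ I : Fin m →₀ ℕ, I z = 0 → I o = 0 → t ∣ coeff I G) :
    PencilMultGE t F G (Pi.single z 1 + Pi.single o 1) 2 := by
  intro I J _ _ k hk
  rw [sum_single_add_single_mul] at hk
  -- `t ^ ε I` divides the coefficients at `I`, and `I z + I o ≥ 1 - ε I`
  let ε : (Fin m →₀ ℕ) → ℕ := fun I => if I z = 0 ∧ I o = 0 then 1 else 0
  have hε : ∀ I, t ^ ε I ∣ coeff I F ∧ t ^ ε I ∣ coeff I G := by
    intro I
    by_cases h : I z = 0 ∧ I o = 0
    · simpa [ε, h] using ⟨hF I h.1 h.2, hG I h.1 h.2⟩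
    · simp [ε, h]
  have hk' : k ≤ ε I + ε J := by
    simp only [ε]
    split_ifs <;> omega
  exact (pow_dvd_pow t hk').trans
    (wedgeCoeff_dvd (hε I).1 (hε I).2 (hε J).1 (hε J).2)

theorem PencilSemistable.le_of_dvd_coeff {R : Type} [CommRing R] {m δ : ℕ} {t : R}
    {F G : MvPolynomial (Fin m) R} (h : PencilSemistable t δ F G)
    {M : Matrix (Fin m) (Fin m) R} (hM : IsUnit M.det) (z o : Fin m)
    (hF : ∀ I : Fin m →₀ ℕ, I z = 0 → I o = 0 → t ∣ coeff I (changeCoords M F))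
    (hG : ∀ I : Fin m →₀ ℕ, I z = 0 → I o = 0 → t ∣ coeff I (changeCoords M G)) :
    m ≤ 2 * δ := by
  have := h M hM _ 2 (pencilMultGE_two_of_dvd_coeff t z o hF hG)
  have hw : ∑ j, (Pi.single z 1 + Pi.single o 1 : Fin m → ℤ) j = 2 := by
    simp [Finset.sum_add_distrib, one_add_one_eq_two]
  rw [hw] at this
  omega

theorem PowerSeries.X_dvd_coeff_changeCoords_map_C {K : Type} [CommRing K] {m : ℕ}
    {M : Matrix (Fin m) (Fin m) K} {F : MvPolynomial (Fin m) (PowerSeries K)} {s : Set (Fin m)}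
    (hF : changeCoords M (MvPolynomial.map constantCoeff F) ∈ Ideal.span (MvPolynomial.X '' s))
    {I : Fin m →₀ ℕ} (hI : ∀ i ∈ s, I i = 0) :
    X ∣ MvPolynomial.coeff I (changeCoords (M.map C) F) := by
  rw [X_dvd_iff, ← MvPolynomial.coeff_map, map_changeCoords, Matrix.map_map]
  simp only [Function.comp_def, constantCoeff_C, Matrix.map_id']
  exact coeff_eq_zero_of_mem_ideal_span_X_image hF hI

theorem semistable_pencil_central_fiber_no_rational_codim_two_linear_space_general
    (Fq : Type) [Field Fq]
    (n : ℕ) (hn : 5 ≤ n)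
    (Q Q' : MvPolynomial (Fin (n + 1)) (PowerSeries Fq))
    (hss : PencilSemistable (PowerSeries.X : PowerSeries Fq) 2 Q Q') :
    ¬ ∃ L₁ L₂ : MvPolynomial (Fin (n + 1)) Fq,
      L₁.IsHomogeneous 1 ∧ L₂.IsHomogeneous 1 ∧ LinearIndependent Fq ![L₁, L₂] ∧
      MvPolynomial.map (PowerSeries.constantCoeff : PowerSeries Fq →+* Fq) Q ∈
        Ideal.span {L₁, L₂} ∧
      MvPolynomial.map (PowerSeries.constantCoeff : PowerSeries Fq →+* Fq) Q' ∈
        Ideal.span {L₁, L₂} := by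
  rintro ⟨L₁, L₂, h₁, h₂, hli, hQ₀, hQ'₀⟩
  obtain ⟨M, σ, hM, hX⟩ := exists_changeCoords_eq_X (L := ![L₁, L₂])
    (Fin.forall_fin_two.mpr ⟨h₁, h₂⟩) hli
  have hred : ∀ F : MvPolynomial (Fin (n + 1)) (PowerSeries Fq),
      map PowerSeries.constantCoeff F ∈ Ideal.span {L₁, L₂} →
      ∀ I : Fin (n + 1) →₀ ℕ, I (σ 0) = 0 → I (σ 1) = 0 →
        PowerSeries.X ∣ coeff I (changeCoords (M.map PowerSeries.C) F) := by
    intro F hF I h0 h1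
    refine PowerSeries.X_dvd_coeff_changeCoords_map_C (s := {σ 0, σ 1}) ?_ (by simp [h0, h1])
    rw [Set.image_pair, ← hX 0, ← hX 1]
    exact changeCoords_mem_span_pair M hF
  have hMC : IsUnit (M.map PowerSeries.C).det := by
    rw [← RingHom.mapMatrix_apply, ← RingHom.map_det]
    exact hM.map _
  have := hss.le_of_dvd_coeff hMC (σ 0) (σ 1) (hred Q hQ₀) (hred Q' hQ'₀)
  omega

/-- For a semistable pencil of quadrics over `F_q[[t]]` (`q` odd, `n ≥ 5`)
whose generic fiber is a smooth complete intersection of two quadrics, the closed fiber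
contains no linear subspace of dimension `n − 2` defined over `F_q`: there are no two linearly
independent linear forms over `F_q` such that both reductions `Q₀, Q₀'` lie in the ideal they
generate. -/
theorem semistable_pencil_central_fiber_no_rational_codim_two_linear_space
    (Fq : Type) [Field Fq] [Fintype Fq] (hq : Odd (Fintype.card Fq))
    (n : ℕ) (hn : 5 ≤ n)
    (Q Q' : MvPolynomial (Fin (n + 1)) (PowerSeries Fq))
    (hQ : Q.IsHomogeneous 2) (hQ' : Q'.IsHomogeneous 2)
    (hss : PencilSemistable (PowerSeries.X : PowerSeries Fq) 2 Q Q')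
    (hsmooth : SmoothCIGenericFiber Fq Q Q') :
    ¬ ∃ L₁ L₂ : MvPolynomial (Fin (n + 1)) Fq,
      L₁.IsHomogeneous 1 ∧ L₂.IsHomogeneous 1 ∧ LinearIndependent Fq ![L₁, L₂] ∧
      MvPolynomial.map (PowerSeries.constantCoeff : PowerSeries Fq →+* Fq) Q ∈
        Ideal.span {L₁, L₂} ∧
      MvPolynomial.map (PowerSeries.constantCoeff : PowerSeries Fq →+* Fq) Q' ∈
        Ideal.span {L₁, L₂} :=
  semistable_pencil_central_fiber_no_rational_codim_two_linear_space_general Fq n hn Q Q' hss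
end
end

section
/- Let S = F_q[[t]] with q odd, n ≥ 5, and let Q, Q' ∈ S[X_0, …, X_n] be homogeneous of degree 2 forming a semistable pencil whose generic fiber is a smooth complete intersection of two quadrics over K = F_q((t)). Let Q_0, Q_0' be the reductions modulo t. If a = (a_0, …, a_n) ∈ S^{n+1} is a formal section (some a_i a unit and Q(a) = Q'(a) = 0), then at the F_q-point ā = a mod t of the central fiber at most one of the quadrics Q_0 = 0 and Q_0' = 0 is singular: it is not the case that both gradients ∇Q_0(ā) and ∇Q_0'(ā) vanish. -/
noncomputable section

open MvPolynomial

/-!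
Since some `a i` is a unit, the matrix `1` with its `i`-th column replaced by `a` is a coordinate
change over `S` taking the basis vector `e_i` to the section `a`. In the new coordinates the
coefficient of `X_i²` in each quadric is its value at `a`, namely `0`, and the coefficient of
`X_i X_r` (`r ≠ i`) is its `r`-th partial derivative at `a`, which lies in `(t)` because both
gradients vanish modulo `t`. Hence `t ^ I i` divides the coefficient of every monomial `X^I`, so the
pencil has multiplicity `≥ 0` at the weight `-e_i`, whereas semistability would force
`(n + 1) · 0 ≤ 2 · 2 · (-1)`.
-/

namespace Finsupp

variable {σ : Type*}

theorem exists_eq_single_one_of_degree_eq_one {J : σ →₀ ℕ} (h : J.degree = 1) :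
    ∃ r, J = single r 1 := by
  obtain ⟨r, hr⟩ : J ∈ Set.range (fun a : σ ↦ single a 1) := range_single_one ▸ h
  exact ⟨r, hr.symm⟩

theorem degree_eq_two_cases [DecidableEq σ] {I : σ →₀ ℕ} (h : I.degree = 2) (i : σ) :
    I i = 0 ∨ I = single i 2 ∨ ∃ r ≠ i, I = single i 1 + single r 1 := by
  have hI := single_add_erase i I
  have hdeg : I i + (I.erase i).degree = 2 := by
    rw [← h, ← degree_single i (I i), ← map_add, hI]
  rcases (by omega : I i = 0 ∨ I i = 1 ∨ I i = 2) with h0 | h1 | h2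
  · exact Or.inl h0
  · obtain ⟨r, hr⟩ := exists_eq_single_one_of_degree_eq_one (J := I.erase i) (by omega)
    refine Or.inr (Or.inr ⟨r, ?_, by rw [← hI, h1, hr]⟩)
    rintro rfl
    simpa using congrArg (· r) hr
  · have h0 : I.erase i = 0 := (degree_eq_zero_iff _).1 (by omega)
    exact Or.inr (Or.inl (by rw [← hI, h2, h0, add_zero]))

end Finsupp

namespace MvPolynomial

variable {R σ τ : Type*} [CommSemiring R]

theorem pderiv_aeval [Fintype σ] [DecidableEq σ] [DecidableEq τ] (g : σ → MvPolynomial τ R)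
    (F : MvPolynomial σ R) (r : τ) :
    pderiv r (aeval g F) = ∑ j, aeval g (pderiv j F) * pderiv r (g j) := by
  induction F using MvPolynomial.induction_on with
  | C c => simp only [aeval_C, algebraMap_eq, pderiv_C, map_zero, zero_mul, Finset.sum_const_zero]
  | add p q hp hq =>
    simp only [map_add, hp, hq, add_mul, Finset.sum_add_distrib]
  | mul_X p k hp =>
    simp only [map_mul, aeval_X, Derivation.leibniz, hp, smul_eq_mul, map_add, pderiv_X,
      add_mul, Finset.sum_add_distrib, Finset.mul_sum, Pi.single_apply, apply_ite (aeval g),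
      map_zero, mul_ite, mul_one, mul_zero, ite_mul, zero_mul, Finset.sum_ite_eq,
      Finset.mem_univ, if_true, mul_assoc]

theorem IsHomogeneous.eval_single_one [DecidableEq σ] {F : MvPolynomial σ R} {d : ℕ}
    (hF : F.IsHomogeneous d) (i : σ) :
    eval (Pi.single i 1) F = coeff (Finsupp.single i d) F := by
  rw [eval_eq, Finset.sum_eq_single (Finsupp.single i d)]
  · rw [Finset.prod_eq_one, mul_one]
    intro j hj
    rw [Finset.mem_singleton.1 (Finsupp.support_single_subset hj), Pi.single_eq_same, one_pow]
  · intro J hJ hne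
    obtain ⟨j, hj, hji⟩ : ∃ j ∈ J.support, j ≠ i := by
      by_contra! hsub
      have hdeg : J.degree = d := by
        by_contra h
        exact mem_support_iff.1 hJ (hF.coeff_eq_zero h)
      rw [← Finset.subset_singleton_iff', Finsupp.support_subset_singleton] at hsub
      rw [hsub, Finsupp.degree_single] at hdeg
      exact hne (hdeg ▸ hsub)
    rw [Finset.prod_eq_zero hj (by simp [Pi.single_eq_of_ne hji, Finsupp.mem_support_iff.1 hj]),
      mul_zero]
  · intro h
    rw [notMem_support_iff.1 h, zero_mul]

theorem IsHomogeneous.eval_single_one_pderiv [DecidableEq σ] {F : MvPolynomial σ R} {d : ℕ}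
    (hF : F.IsHomogeneous (d + 1)) {i r : σ} (hir : i ≠ r) :
    eval (Pi.single i 1) (pderiv r F) = coeff (Finsupp.single i d + Finsupp.single r 1) F := by
  rw [hF.pderiv.eval_single_one, coeff_pderiv, Nat.add_sub_cancel, Finsupp.single_eq_of_ne hir.symm,
    Nat.cast_zero, zero_add, mul_one]

end MvPolynomial

section CoordinateChange

open Matrix

variable {R : Type} [CommRing R] {m : ℕ}

theorem eval_changeCoords (M : Matrix (Fin m) (Fin m) R) (F : MvPolynomial (Fin m) R)
    (v : Fin m → R) : eval v (changeCoords M F) = eval (M *ᵥ v) F := by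
  rw [changeCoords, aeval_def, eval₂_comp_left (eval v)]
  congr 1
  · ext; simp
  · ext i; simp [mulVec, dotProduct]

theorem eval_pderiv_changeCoords (M : Matrix (Fin m) (Fin m) R) (F : MvPolynomial (Fin m) R)
    (v : Fin m → R) (r : Fin m) :
    eval v (pderiv r (changeCoords M F)) = ∑ j, eval (M *ᵥ v) (pderiv j F) * M j r := by
  rw [changeCoords, pderiv_aeval, map_sum]
  refine Finset.sum_congr rfl fun j _ ↦ ?_
  rw [map_mul, ← changeCoords, eval_changeCoords]
  simp [pderiv_X, Pi.single_apply]

theorem isHomogeneous_changeCoords (M : Matrix (Fin m) (Fin m) R) {F : MvPolynomial (Fin m) R}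
    {d : ℕ} (hF : F.IsHomogeneous d) : (changeCoords M F).IsHomogeneous d := by
  rw [changeCoords, ← one_mul d]
  exact hF.aeval _ fun i ↦ IsHomogeneous.sum _ _ _ fun j _ ↦ isHomogeneous_C_mul_X (M i j) j

end CoordinateChange

theorem Matrix.det_one_updateCol {n R : Type*} [Fintype n] [DecidableEq n] [CommRing R] (i : n)
    (a : n → R) : ((1 : Matrix n n R).updateCol i a).det = a i := by
  rw [← cramer_apply, cramer_one]
  rfl

section Pencil

open Matrix

variable {R : Type} [CommRing R] {m : ℕ}

theorem pow_apply_dvd_coeff_changeCoords_updateCol {t : R} {P : MvPolynomial (Fin m) R}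
    (hP : P.IsHomogeneous 2) {a : Fin m → R} (hPa : eval a P = 0)
    (hgrad : ∀ r, t ∣ eval a (pderiv r P)) (i : Fin m) (I : Fin m →₀ ℕ) :
    t ^ I i ∣ coeff I (changeCoords ((1 : Matrix (Fin m) (Fin m) R).updateCol i a) P) := by
  set M := (1 : Matrix (Fin m) (Fin m) R).updateCol i a
  have hP' := isHomogeneous_changeCoords M hP
  have hMi : M *ᵥ Pi.single i 1 = a := by
    rw [mulVec_single_one]
    ext j
    simp [M]
  by_cases hI : coeff I (changeCoords M P) = 0
  · rw [hI]
    exact dvd_zero _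
  have hdeg : I.degree = 2 := by
    by_contra h
    exact hI (hP'.coeff_eq_zero h)
  rcases Finsupp.degree_eq_two_cases hdeg i with h0 | rfl | ⟨r, hri, rfl⟩
  · rw [h0, pow_zero]
    exact one_dvd _
  · rw [← hP'.eval_single_one, eval_changeCoords, hMi, hPa]
    exact dvd_zero _
  · rw [← hP'.eval_single_one_pderiv (d := 1) hri.symm, eval_pderiv_changeCoords, hMi]
    simpa [M, updateCol_ne hri, one_apply, Finsupp.single_eq_of_ne hri.symm] using hgrad r

theorem pencilMultGE_neg_single_of_pow_dvd_coeff {t : R} {F G : MvPolynomial (Fin m) R}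
    {i : Fin m} (hF : ∀ I, t ^ I i ∣ coeff I F) (hG : ∀ I, t ^ I i ∣ coeff I G) :
    PencilMultGE t F G (-Pi.single i 1) 0 := by
  intro I J _ _ k hk
  have hk' : k ≤ I i + J i := by
    simp only [Pi.neg_apply, Pi.single_apply, neg_mul, ite_mul, one_mul, zero_mul,
      Finset.sum_neg_distrib, Finset.sum_ite_eq', Finset.mem_univ, ↓reduceIte, neg_add_rev,
      zero_sub, neg_neg] at hk
    omega
  refine (pow_dvd_pow t hk').trans (dvd_sub ?_ ?_)
  · rw [pow_add]
    exact mul_dvd_mul (hF I) (hG J)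
  · rw [add_comm, pow_add]
    exact mul_dvd_mul (hF J) (hG I)

theorem PencilSemistable.not_pencilMultGE_neg_single {t : R} {δ : ℕ} (hδ : δ ≠ 0)
    {F G : MvPolynomial (Fin m) R} (h : PencilSemistable t δ F G)
    {M : Matrix (Fin m) (Fin m) R} (hM : IsUnit M.det) (i : Fin m) :
    ¬ PencilMultGE t (changeCoords M F) (changeCoords M G) (-Pi.single i 1) 0 := by
  intro hmult
  have := h M hM _ 0 hmult
  simp only [mul_zero, Pi.neg_apply, Finset.sum_neg_distrib, Finset.sum_pi_single',
    Finset.mem_univ, ↓reduceIte, Int.reduceNeg, mul_neg, mul_one, Int.neg_nonneg] at this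
  omega

end Pencil

theorem semistable_pencil_formal_section_not_both_quadrics_singular_general
    (Fq : Type) [Field Fq]
    (n : ℕ)
    (Q Q' : MvPolynomial (Fin (n + 1)) (PowerSeries Fq))
    (hQ : Q.IsHomogeneous 2) (hQ' : Q'.IsHomogeneous 2)
    (hss : PencilSemistable (PowerSeries.X : PowerSeries Fq) 2 Q Q')
    (a : Fin (n + 1) → PowerSeries Fq) (ha : ∃ i, IsUnit (a i))
    (haQ : eval a Q = 0) (haQ' : eval a Q' = 0) :
    ¬ ((∀ i, eval (fun j => (PowerSeries.constantCoeff : PowerSeries Fq →+* Fq) (a j))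
          (pderiv i (MvPolynomial.map ((PowerSeries.constantCoeff : PowerSeries Fq →+* Fq)) Q)) = 0) ∧
       (∀ i, eval (fun j => (PowerSeries.constantCoeff : PowerSeries Fq →+* Fq) (a j))
          (pderiv i (MvPolynomial.map ((PowerSeries.constantCoeff : PowerSeries Fq →+* Fq)) Q')) = 0)) := by
  rintro ⟨hQsing, hQ'sing⟩
  obtain ⟨i, hi⟩ := ha
  have X_dvd_pderiv : ∀ P : MvPolynomial (Fin (n + 1)) (PowerSeries Fq),
      (∀ r, eval (fun j => PowerSeries.constantCoeff (a j))
        (pderiv r (MvPolynomial.map PowerSeries.constantCoeff P)) = 0) →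
      ∀ r, PowerSeries.X ∣ eval a (pderiv r P) := fun P hP r ↦ by
    rw [PowerSeries.X_dvd_iff, map_eval, ← pderiv_map]
    exact hP r
  refine hss.not_pencilMultGE_neg_single two_ne_zero (M := (1 : Matrix _ _ _).updateCol i a)
    (by rwa [Matrix.det_one_updateCol]) i (pencilMultGE_neg_single_of_pow_dvd_coeff ?_ ?_)
  · exact pow_apply_dvd_coeff_changeCoords_updateCol hQ haQ (X_dvd_pderiv Q hQsing) i
  · exact pow_apply_dvd_coeff_changeCoords_updateCol hQ' haQ' (X_dvd_pderiv Q' hQ'sing) i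

/-- For a semistable pencil of quadrics over `F_q[[t]]` (`q` odd, `n ≥ 5`)
whose generic fiber is a smooth complete intersection of two quadrics, and a formal section
`a` of the family, at the `F_q`-point `ā = a mod t` of the central fiber at most one of the
two quadrics `Q₀ = 0`, `Q₀' = 0` is singular: the gradients `∇Q₀(ā)` and `∇Q₀'(ā)` do not
both vanish. -/
theorem semistable_pencil_formal_section_not_both_quadrics_singular
    (Fq : Type) [Field Fq] [Fintype Fq] (hq : Odd (Fintype.card Fq))
    (n : ℕ) (hn : 5 ≤ n)
    (Q Q' : MvPolynomial (Fin (n + 1)) (PowerSeries Fq))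
    (hQ : Q.IsHomogeneous 2) (hQ' : Q'.IsHomogeneous 2)
    (hss : PencilSemistable (PowerSeries.X : PowerSeries Fq) 2 Q Q')
    (hsmooth : SmoothCIGenericFiber Fq Q Q')
    (a : Fin (n + 1) → PowerSeries Fq) (ha : ∃ i, IsUnit (a i))
    (haQ : eval a Q = 0) (haQ' : eval a Q' = 0) :
    ¬ ((∀ i, eval (fun j => (PowerSeries.constantCoeff : PowerSeries Fq →+* Fq) (a j))
          (pderiv i (MvPolynomial.map ((PowerSeries.constantCoeff : PowerSeries Fq →+* Fq)) Q)) = 0) ∧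
       (∀ i, eval (fun j => (PowerSeries.constantCoeff : PowerSeries Fq →+* Fq) (a j))
          (pderiv i (MvPolynomial.map ((PowerSeries.constantCoeff : PowerSeries Fq →+* Fq)) Q')) = 0)) :=
  semistable_pencil_formal_section_not_both_quadrics_singular_general Fq n Q Q' hQ hQ' hss a ha haQ
    haQ'
end
end
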